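/- Let I ⊆ {0,…,m} be nonempty and satisfy: 1 ∈ I implies 0 ∈ I, and m−1 ∈ I implies m ∈ I. Let w ∈ W̃_{D_m}, let x ∈ W_{I,D_m}, and let k ∈ I. Then w satisfies (SP1') at k if and only if xw satisfies (SP1') at k, and similarly for (SP2') and for (SP3'). In particular, w satisfies (SP1'), (SP2'), (SP3') at every k ∈ I if and only if xw does. -/

import Mathlib

/-!
Write `x = t_{tx} σx`. As `x` fixes `a_k`, `ν_k^{xw} = x(w a_k) − x a_k = σx · ν_k^w`, so `ν_k^{xw}` is
`ν_k^w` with its entries permuted by `σx`. This permutation commutes with `j ↦ j*`, and it preserves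
`B_k` because `tx = a_k − σx · a_k` is integral while `a_k` is half-integral exactly off `B_k`. Each
condition is invariant under such permutations. For `ν − μ ∈ Q∨` the point is that the parity of the
sum of the first `m` entries is unchanged: permuting a vector whose entries at `j` and `j*` have equal
parity only trades some of those entries for their partners.
-/

open Finset

namespace TypeD

abbrev VecZ (m : ℕ) := Fin (2 * m) → ℤ
abbrev VecR (m : ℕ) := Fin (2 * m) → ℝ

/-- `σ ∈ S_{2m}^∘`: even, and commuting with `j ↦ j*`. -/
def InSO (m : ℕ) (σ : Equiv.Perm (Fin (2 * m))) : Prop :=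
  Equiv.Perm.sign σ = 1 ∧ ∀ j, σ j.rev = (σ j).rev

/-- `t ∈ X_{*D_m}`. -/
def InXD (m : ℕ) (t : VecZ m) : Prop :=
  ∀ j j' : Fin (2 * m), t j + t j.rev = t j' + t j'.rev

/-- `ω_i ∈ ℤ^{2m}`: writing `i = 2m·b + c` with `0 ≤ c < 2m`, the first `c` entries
are `-b-1` and the rest are `-b`. -/
def omegaD (m : ℕ) (i : ℤ) (j : Fin (2 * m)) : ℤ :=
  if ((j : ℕ) : ℤ) < i % (2 * (m : ℤ)) then -(i / (2 * (m : ℤ))) - 1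
  else -(i / (2 * (m : ℤ)))

/-- `μ_k^w = w·ω_k − ω_k` for `w = t_t σ`. -/
def muD (m : ℕ) (t : VecZ m) (σ : Equiv.Perm (Fin (2 * m))) (k : ℤ) (j : Fin (2 * m)) : ℤ :=
  t j + omegaD m k (σ⁻¹ j) - omegaD m k j

/-- `ν_k^w = (μ_k^w + μ_{−k}^w)/2`, real-valued. -/
noncomputable def nuD (m : ℕ) (t : VecZ m) (σ : Equiv.Perm (Fin (2 * m))) (k : ℤ) (j : Fin (2 * m)) : ℝ :=
  ((muD m t σ k j + muD m t σ (-k) j : ℤ) : ℝ) / 2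

/-- `c_k^w = #{j : μ_k^w(j) = 2}`. -/
noncomputable def cD (m : ℕ) (t : VecZ m) (σ : Equiv.Perm (Fin (2 * m))) (k : ℤ) : ℕ :=
  Set.ncard {j : Fin (2 * m) | muD m t σ k j = 2}

/-- the cocharacter `μ = (2^{(q)}, 1^{(2m−2q)}, 0^{(q)})`. -/
def muQ (m q : ℕ) (j : Fin (2 * m)) : ℤ :=
  if (j : ℕ) < q then 2 else if (j : ℕ) < 2 * m - q then 1 else 0

/-- the coroot lattice `Q∨_{D_m}`. -/
def QveeD (m : ℕ) : Set (VecZ m) :=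
  {x | (∀ j, x j + x j.rev = 0) ∧
    Even (∑ j ∈ Finset.univ.filter (fun j : Fin (2 * m) => (j : ℕ) < m), x j)}

/-- `j ∈ A_a` (1-indexed `{1,…,a} ∪ {2m+1−a,…,2m}`). -/
def memA (m a : ℕ) (j : Fin (2 * m)) : Prop := (j : ℕ) < a ∨ 2 * m - a ≤ (j : ℕ)

/-- `j ∈ B_a` (1-indexed `{a+1,…,2m−a}`). -/
def memB (m a : ℕ) (j : Fin (2 * m)) : Prop := a ≤ (j : ℕ) ∧ (j : ℕ) < 2 * m - a

def IsIntVal (x : ℝ) : Prop := ∃ z : ℤ, x = (z : ℝ)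

/-- a half-integer: an element of `(1/2)ℤ ∖ ℤ`. -/
def IsHalfInt (x : ℝ) : Prop := (∃ z : ℤ, x = (z : ℝ) / 2) ∧ ¬ IsIntVal x

/-- `μ_k^w` is self-dual, i.e. `μ_k^w = μ_{−k}^w`. -/
def SelfDual (m : ℕ) (t : VecZ m) (σ : Equiv.Perm (Fin (2 * m))) (k : ℤ) : Prop :=
  ∀ j, muD m t σ k j = muD m t σ (-k) j

/-- (SP1) at `k`. -/
def SP1 (m : ℕ) (t : VecZ m) (σ : Equiv.Perm (Fin (2 * m))) (k : ℤ) : Prop :=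
  (∀ j, muD m t σ k j + muD m t σ (-k) j.rev = 2) ∧
  (∀ j, 0 ≤ muD m t σ k j ∧ muD m t σ k j ≤ 2)

/-- (SP2) at `k`. -/
def SP2 (m q : ℕ) (t : VecZ m) (σ : Equiv.Perm (Fin (2 * m))) (k : ℤ) : Prop :=
  cD m t σ k ≤ q

/-- (SP3) at `k`. -/
def SP3 (m q : ℕ) (t : VecZ m) (σ : Equiv.Perm (Fin (2 * m))) (k : ℕ) : Prop :=
  (SelfDual m t σ (k : ℤ) ∧ (fun j => muD m t σ (k : ℤ) j - muQ m q j) ∉ QveeD m) →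
    ∃ j₁ j₂ : Fin (2 * m), memA m k j₁ ∧ memB m k j₂ ∧
      muD m t σ (k : ℤ) j₁ = 1 ∧ muD m t σ (k : ℤ) j₂ = 1

/-- (SP1') at `k`. -/
def SP1' (m : ℕ) (t : VecZ m) (σ : Equiv.Perm (Fin (2 * m))) (k : ℤ) : Prop :=
  (∀ j, nuD m t σ k j + nuD m t σ k j.rev = 2) ∧
  (∀ j, 0 ≤ nuD m t σ k j ∧ nuD m t σ k j ≤ 2)

/-- (SP2') at `k`. -/
def SP2' (m q : ℕ) (t : VecZ m) (σ : Equiv.Perm (Fin (2 * m))) (k : ℤ) : Prop :=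
  (Set.ncard {j : Fin (2 * m) | nuD m t σ k j = 2} : ℝ) +
    (Set.ncard {j : Fin (2 * m) | ¬ IsIntVal (nuD m t σ k j)} : ℝ) / 4 ≤ (q : ℝ)

/-- `ν_k^w − μ ∈ Q∨_{D_m}`. -/
def NuCongQvee (m q : ℕ) (t : VecZ m) (σ : Equiv.Perm (Fin (2 * m))) (k : ℤ) : Prop :=
  ∃ y ∈ QveeD m, ∀ j, nuD m t σ k j = ((muQ m q j + y j : ℤ) : ℝ)

/-- (SP3') at `k`. -/
def SP3' (m q : ℕ) (t : VecZ m) (σ : Equiv.Perm (Fin (2 * m))) (k : ℕ) : Prop :=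
  ((∀ j, IsIntVal (nuD m t σ (k : ℤ) j)) ∧ ¬ NuCongQvee m q t σ (k : ℤ)) →
    ∃ j₁ j₂ : Fin (2 * m), memA m k j₁ ∧ memB m k j₂ ∧
      nuD m t σ (k : ℤ) j₁ = 1 ∧ nuD m t σ (k : ℤ) j₂ = 1

/-- the orbit `S_{2m}^∘ · μ` inside `ℝ^{2m}`. -/
def OrbitMu (m q : ℕ) : Set (VecR m) :=
  {x | ∃ σ : Equiv.Perm (Fin (2 * m)), InSO m σ ∧ ∀ j, x j = ((muQ m q (σ⁻¹ j) : ℤ) : ℝ)}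

/-- `Conv(S_{2m}^∘ · μ)`. -/
def ConvMu (m q : ℕ) : Set (VecR m) := convexHull ℝ (OrbitMu m q)

/-- the affine action of `w = t_t σ` on `ℝ^{2m}`. -/
noncomputable def actR (m : ℕ) (t : VecZ m) (σ : Equiv.Perm (Fin (2 * m))) (x : VecR m) (j : Fin (2 * m)) : ℝ :=
  (t j : ℝ) + x (σ⁻¹ j)

/-- the point `a_k = ((−1/2)^{(k)}, 0^{(2m−2k)}, (1/2)^{(k)})`. -/
noncomputable def aD (m k : ℕ) (j : Fin (2 * m)) : ℝ :=
  if (j : ℕ) < k then -(1 / 2) else if (j : ℕ) < 2 * m - k then 0 else 1 / 2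

/-- the point `a_{0'} = (−1, 0^{(2m−2)}, 1)`. -/
noncomputable def a0' (m : ℕ) (j : Fin (2 * m)) : ℝ :=
  if (j : ℕ) = 0 then -1 else if (j : ℕ) = 2 * m - 1 then 1 else 0

/-- the point `a_{m'} = ((−1/2)^{(m−1)}, 1/2, −1/2, (1/2)^{(m−1)})`. -/
noncomputable def am' (m : ℕ) (j : Fin (2 * m)) : ℝ :=
  if (j : ℕ) < m - 1 then -(1 / 2)
  else if (j : ℕ) = m - 1 then 1 / 2
  else if (j : ℕ) = m then -(1 / 2)
  else 1 / 2

/-- `ν_{0'}^w = w·a_{0'} − a_{0'}`. -/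
noncomputable def nu0' (m : ℕ) (t : VecZ m) (σ : Equiv.Perm (Fin (2 * m))) (j : Fin (2 * m)) : ℝ :=
  actR m t σ (a0' m) j - a0' m j

/-- `ν_{m'}^w = w·a_{m'} − a_{m'}`. -/
noncomputable def num' (m : ℕ) (t : VecZ m) (σ : Equiv.Perm (Fin (2 * m))) (j : Fin (2 * m)) : ℝ :=
  actR m t σ (am' m) j - am' m j

/-- membership in the real apartment `{x : x(1)+x(2m) = ⋯ = x(m)+x(m+1)}`. -/
def InApartR (m : ℕ) (x : VecR m) : Prop :=
  ∀ j j' : Fin (2 * m), x j + x j.rev = x j' + x j'.rev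

/-- membership in the base alcove `A_{D_m}`. -/
def InAlcove (m : ℕ) (x : VecR m) : Prop :=
  InApartR m x ∧
  (∀ j0 jt : Fin (2 * m), (j0 : ℕ) = 0 → 1 ≤ (jt : ℕ) → (jt : ℕ) ≤ m →
    x j0 < x jt ∧ x j0.rev - 1 < x jt) ∧
  (∀ j j' : Fin (2 * m), 1 ≤ (j : ℕ) → (j : ℕ) ≤ m - 2 → (j : ℕ) < (j' : ℕ) →
    (j' : ℕ) ≤ m → x j < x j')

/-- `w = t_t σ` is μ-permissible: `w ≡ t_μ mod W_{aff}` (equivalently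
`ν_0^w − μ ∈ Q∨_{D_m}`) and `w·x − x ∈ Conv(S_{2m}^∘ μ)` for all `x` in the base alcove. -/
def MuPermissible (m q : ℕ) (t : VecZ m) (σ : Equiv.Perm (Fin (2 * m))) : Prop :=
  NuCongQvee m q t σ 0 ∧
  ∀ x : VecR m, InAlcove m x → (fun j => actR m t σ x j - x j) ∈ ConvMu m q

/-- the coroot `α∨_{i,j} = e_i − e_j + e_{j*} − e_{i*}`. -/
def corootD (m : ℕ) (i j l : Fin (2 * m)) : ℤ :=
  (if l = i then 1 else 0) - (if l = j then 1 else 0) +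
    (if l = j.rev then 1 else 0) - (if l = i.rev then 1 else 0)

/-- `(t', σ')` represents `s_{α̃_{i,j;d}} · w` for `w = t_t σ`: on the apartment it
acts by `x ↦ w·x − ⟨α̃_{i,j;d}, w·x⟩ α∨_{i,j}`. -/
def IsReflOf (m : ℕ) (i j : Fin (2 * m)) (d : ℤ) (t : VecZ m) (σ : Equiv.Perm (Fin (2 * m)))
    (t' : VecZ m) (σ' : Equiv.Perm (Fin (2 * m))) : Prop :=
  ∀ x : VecR m, InApartR m x → ∀ l,
    actR m t' σ' x l =
      actR m t σ x l - (actR m t σ x i - actR m t σ x j - (d : ℝ)) * (corootD m i j l : ℝ)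

/-- Membership of `i` in `2mℤ ± I`. -/
def FaceIdxD (m : ℕ) (I : Finset ℕ) (i : ℤ) : Prop :=
  ∃ a ∈ I, ∃ b : ℤ, i = 2 * (m : ℤ) * b + (a : ℤ) ∨ i = 2 * (m : ℤ) * b - (a : ℤ)

/-- `v` is a `d`-face of type `(2m, I)`. -/
structure IsFaceD (m : ℕ) (I : Finset ℕ) (d : ℤ) (v : ℤ → VecZ m) : Prop where
  per : ∀ i, FaceIdxD m I i → ∀ j, v (i + 2 * (m : ℤ)) j = v i j - 1
  mono : ∀ i i', FaceIdxD m I i → FaceIdxD m I i' → i ≤ i' → ∀ j, v i' j ≤ v i j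
  sumEq : ∀ i i', FaceIdxD m I i → FaceIdxD m I i' → (∑ j, v i j) - (∑ j, v i' j) = i' - i
  dual : ∀ i, FaceIdxD m I i → ∀ j, v i j + v (-i) j.rev = d

/-- `μ_i^v := v_i − ω_i` for a face `v`. -/
def muFaceD (m : ℕ) (v : ℤ → VecZ m) (i : ℤ) (j : Fin (2 * m)) : ℤ := v i j - omegaD m i j

/-- `ε` of a translation vector: the sum of the first `m` entries mod 2. -/
def epsVec (m : ℕ) (x : VecZ m) : ZMod 2 :=
  ((∑ j ∈ Finset.univ.filter (fun j : Fin (2 * m) => (j : ℕ) < m), x j : ℤ) : ZMod 2)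

/-- membership of `(v, γ)` in `F_{I,D_m}`. -/
def MemFD (m : ℕ) (I : Finset ℕ) (v : ℤ → VecZ m) (γ : ZMod 2) : Prop :=
  (∃ d, IsFaceD m I d v) ∧
  (if 0 ∈ I then
    if m ∈ I then
      (fun j => muFaceD m v 0 j - muFaceD m v (m : ℤ) j) ∈ QveeD m ∧
        γ = epsVec m (fun j => muFaceD m v 0 j)
    else γ = epsVec m (fun j => muFaceD m v 0 j)
  else if m ∈ I then γ = epsVec m (fun j => muFaceD m v (m : ℤ) j)
  else True)

/-- membership of `t_tx σx` in `W_{I,D_m}` (the group conditions on `(tx, σx)` being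
assumed separately): it lies in `W_{aff,D_m}` and fixes `a_k` for all `k ∈ I`. -/
def MemWI (m : ℕ) (I : Finset ℕ) (tx : VecZ m) (σx : Equiv.Perm (Fin (2 * m))) : Prop :=
  tx ∈ QveeD m ∧ ∀ k ∈ I, ∀ j, (tx j : ℝ) + aD m k (σx⁻¹ j) = aD m k j

/-- (SP1) at `k` for a face. -/
def SP1F (m : ℕ) (v : ℤ → VecZ m) (k : ℕ) : Prop :=
  (∀ j, muFaceD m v (k : ℤ) j + muFaceD m v (-(k : ℤ)) j.rev = 2) ∧
  (∀ j, 0 ≤ muFaceD m v (k : ℤ) j ∧ muFaceD m v (k : ℤ) j ≤ 2)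

/-- (SP2) at `k` for a face. -/
def SP2F (m q : ℕ) (v : ℤ → VecZ m) (k : ℕ) : Prop :=
  Set.ncard {j : Fin (2 * m) | muFaceD m v (k : ℤ) j = 2} ≤ q

/-- (SP3) at `k` for a face. -/
def SP3F (m q : ℕ) (v : ℤ → VecZ m) (k : ℕ) : Prop :=
  ((∀ j, muFaceD m v (k : ℤ) j = muFaceD m v (-(k : ℤ)) j) ∧
      (fun j => muFaceD m v (k : ℤ) j - muQ m q j) ∉ QveeD m) →
    ∃ j₁ j₂ : Fin (2 * m), memA m k j₁ ∧ memB m k j₂ ∧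
      muFaceD m v (k : ℤ) j₁ = 1 ∧ muFaceD m v (k : ℤ) j₂ = 1

/-- `(v, γ) ∈ F_{I,D_m}` is μ-spin-permissible. -/
def SpinPermF (m q : ℕ) (I : Finset ℕ) (v : ℤ → VecZ m) (γ : ZMod 2) : Prop :=
  γ = epsVec m (fun j => muQ m q j) ∧ ∀ k ∈ I, SP1F m v k ∧ SP2F m q v k ∧ SP3F m q v k

lemma inv_apply_rev {m : ℕ} {e : Equiv.Perm (Fin (2 * m))} (he : ∀ j, e j.rev = (e j).rev)
    (j : Fin (2 * m)) : e⁻¹ j.rev = (e⁻¹ j).rev :=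
  e.injective (by simp [he])

lemma omegaD_of_eq_add {m : ℕ} {i b c : ℤ} (hi : c + 2 * m * b = i) (hc : 0 ≤ c)
    (hc' : c < 2 * m) (j : Fin (2 * m)) :
    omegaD m i j = if ((j : ℕ) : ℤ) < c then -b - 1 else -b := by
  obtain ⟨hb, hc⟩ := (Int.ediv_emod_unique (by omega)).mpr ⟨hi, hc, hc'⟩
  simp only [omegaD, hb, hc]

lemma omegaD_add_omegaD_neg {m k : ℕ} (hk : k ≤ m) (j : Fin (2 * m)) :
    ((omegaD m k j + omegaD m (-k) j : ℤ) : ℝ) = 2 * aD m k j := by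
  have hj := j.isLt
  rw [omegaD_of_eq_add (b := 0) (c := k) (by ring) (by omega) (by omega)]
  rcases Nat.eq_zero_or_pos k with rfl | hk0
  · simp [omegaD, aD]
  · rw [omegaD_of_eq_add (b := -1) (c := 2 * m - k) (by ring) (by omega) (by omega)]
    unfold aD
    split_ifs <;> first | omega | norm_num

lemma nuD_eq_actR_sub {m k : ℕ} (hk : k ≤ m) (t : VecZ m) (σ : Equiv.Perm (Fin (2 * m)))
    (j : Fin (2 * m)) : nuD m t σ k j = actR m t σ (aD m k) j - aD m k j := by
  have h₁ := omegaD_add_omegaD_neg hk (σ⁻¹ j)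
  have h₂ := omegaD_add_omegaD_neg hk j
  push_cast at h₁ h₂
  simp only [nuD, muD, actR]
  push_cast
  linarith

lemma actR_mul (m : ℕ) (t tx : VecZ m) (σ σx : Equiv.Perm (Fin (2 * m))) (y : VecR m) :
    actR m (fun l => tx l + t (σx⁻¹ l)) (σx * σ) y = actR m tx σx (actR m t σ y) := by
  funext j
  simp only [actR, mul_inv_rev, Equiv.Perm.mul_apply, Int.cast_add]
  ring

lemma nuD_mul_apply_of_fixes {m k : ℕ} (hk : k ≤ m) (t tx : VecZ m)
    (σ σx : Equiv.Perm (Fin (2 * m))) (hfix : ∀ j, (tx j : ℝ) + aD m k (σx⁻¹ j) = aD m k j)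
    (j : Fin (2 * m)) :
    nuD m (fun l => tx l + t (σx⁻¹ l)) (σx * σ) k (σx j) = nuD m t σ k j := by
  have hx := hfix (σx j)
  simp only [Equiv.Perm.coe_inv, Equiv.symm_apply_apply] at hx
  rw [nuD_eq_actR_sub hk, nuD_eq_actR_sub hk, actR_mul, ← hx]
  simp only [actR, Equiv.Perm.coe_inv, Equiv.symm_apply_apply]
  ring

lemma isIntVal_intCast_add_iff (n : ℤ) (x : ℝ) : IsIntVal (n + x) ↔ IsIntVal x :=
  ⟨fun ⟨z, hz⟩ => ⟨z - n, by push_cast; linarith⟩,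
    fun ⟨z, hz⟩ => ⟨n + z, by push_cast; linarith⟩⟩

lemma isIntVal_aD_iff {m k : ℕ} (j : Fin (2 * m)) :
    IsIntVal (aD m k j) ↔ memB m k j := by
  unfold aD memB
  split_ifs with h₁ h₂
  · refine iff_of_false (fun ⟨z, hz⟩ => ?_) (by omega)
    have : 2 * z = -1 := by exact_mod_cast (show ((2 * z : ℤ) : ℝ) = -1 by push_cast; linarith)
    omega
  · exact iff_of_true ⟨0, by simp⟩ (by omega)
  · refine iff_of_false (fun ⟨z, hz⟩ => ?_) (by omega)
    have : 2 * z = 1 := by exact_mod_cast (show ((2 * z : ℤ) : ℝ) = 1 by push_cast; linarith)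
    omega

lemma memB_apply_iff_of_fixes {m k : ℕ} {tx : VecZ m}
    {σx : Equiv.Perm (Fin (2 * m))} (hfix : ∀ j, (tx j : ℝ) + aD m k (σx⁻¹ j) = aD m k j)
    (j : Fin (2 * m)) : memB m k (σx j) ↔ memB m k j := by
  have hx := hfix (σx j)
  simp only [Equiv.Perm.coe_inv, Equiv.symm_apply_apply] at hx
  rw [← isIntVal_aD_iff, ← isIntVal_aD_iff, ← hx, isIntVal_intCast_add_iff]

lemma memA_iff_not_memB {m k : ℕ} (j : Fin (2 * m)) : memA m k j ↔ ¬ memB m k j := by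
  unfold memA memB
  omega

def lowerRep (m : ℕ) (j : Fin (2 * m)) : Fin (2 * m) := if (j : ℕ) < m then j else j.rev

lemma lowerRep_lt {m : ℕ} (j : Fin (2 * m)) : (lowerRep m j : ℕ) < m := by
  have := j.isLt
  unfold lowerRep
  split_ifs
  · assumption
  · rw [Fin.val_rev]
    omega

lemma lowerRep_inv_lowerRep {m : ℕ} {e : Equiv.Perm (Fin (2 * m))}
    (he : ∀ j, e j.rev = (e j).rev) {a : Fin (2 * m)} (ha : (a : ℕ) < m) :
    lowerRep m (e⁻¹ (lowerRep m (e a))) = a := by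
  have := a.isLt
  unfold lowerRep
  split_ifs with h₁ h₂ h₂ <;> simp_all [inv_apply_rev he, Fin.val_rev]; omega

lemma even_sub_lowerRep {m : ℕ} {z : VecZ m} (hz : ∀ j, Even (z j + z j.rev))
    (j : Fin (2 * m)) : Even (z j - z (lowerRep m j)) := by
  unfold lowerRep
  split_ifs
  · simp
  · rw [show z j - z j.rev = z j + z j.rev - 2 * z j.rev by ring]
    exact (hz j).sub (even_two_mul _)

lemma even_sum_lowerHalf_comp_sub {m : ℕ} {z : VecZ m} (hz : ∀ j, Even (z j + z j.rev))
    {e : Equiv.Perm (Fin (2 * m))} (he : ∀ j, e j.rev = (e j).rev) :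
    Even (∑ j ∈ univ.filter (fun j : Fin (2 * m) => (j : ℕ) < m), (z (e j) - z j)) := by
  have he' := inv_apply_rev he
  have hrep : ∑ j ∈ univ.filter (fun j : Fin (2 * m) => (j : ℕ) < m), z (lowerRep m (e j)) =
      ∑ j ∈ univ.filter (fun j : Fin (2 * m) => (j : ℕ) < m), z j :=
    sum_nbij' (fun j => lowerRep m (e j)) (fun j => lowerRep m (e⁻¹ j))
      (fun _ _ => by simpa using lowerRep_lt _) (fun _ _ => by simpa using lowerRep_lt _)
      (fun _ ha => lowerRep_inv_lowerRep he (by simpa using ha))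
      (fun _ ha => by simpa using lowerRep_inv_lowerRep he' (by simpa using ha))
      (fun _ _ => rfl)
  rw [sum_sub_distrib, ← hrep, ← sum_sub_distrib]
  exact even_sum _ fun j _ => even_sub_lowerRep hz (e j)

lemma add_mem_QveeD {m : ℕ} {x y : VecZ m} (hx : x ∈ QveeD m) (hy : y ∈ QveeD m) :
    x + y ∈ QveeD m :=
  ⟨fun j => by simp only [Pi.add_apply]; linarith [hx.1 j, hy.1 j],
    by simpa only [Pi.add_apply, sum_add_distrib] using hx.2.add hy.2⟩

lemma comp_sub_mem_QveeD {m : ℕ} {z : VecZ m} {c : ℤ} (hz : ∀ j, z j + z j.rev = c)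
    (hc : Even c) {e : Equiv.Perm (Fin (2 * m))} (he : ∀ j, e j.rev = (e j).rev) :
    (fun j => z (e j) - z j) ∈ QveeD m :=
  ⟨fun j => by simp only [he]; linarith [hz j, hz (e j)],
    even_sum_lowerHalf_comp_sub (fun j => hz j ▸ hc) he⟩

lemma muQ_add_muQ_rev {m q : ℕ} (hq : q ≤ m) (j : Fin (2 * m)) :
    muQ m q j + muQ m q j.rev = 2 := by
  have hj := j.isLt
  simp only [muQ, Fin.val_rev]
  split_ifs <;> omega

section PermutedNu

variable {m q : ℕ} {t t' : VecZ m} {σ σ' e : Equiv.Perm (Fin (2 * m))}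

lemma NuCongQvee.of_perm {k : ℤ} (hq : q ≤ m) (he : ∀ j, e j.rev = (e j).rev)
    (hν : ∀ j, nuD m t' σ' k (e j) = nuD m t σ k j) (h : NuCongQvee m q t σ k) :
    NuCongQvee m q t' σ' k := by
  obtain ⟨y, hy, hνy⟩ := h
  set z : VecZ m := fun j => muQ m q j + y j with hz
  have hz_rev : ∀ j, z j + z j.rev = 2 := fun j => by
    simp only [hz]; linarith [muQ_add_muQ_rev hq j, hy.1 j]
  refine ⟨(fun j => z (e⁻¹ j) - z j) + y,
    add_mem_QveeD (comp_sub_mem_QveeD hz_rev even_two (inv_apply_rev he)) hy, fun j => ?_⟩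
  have hνj := hν (e⁻¹ j)
  simp only [Equiv.Perm.coe_inv, Equiv.apply_symm_apply] at hνj
  simp only [hνj, hνy, hz, Pi.add_apply, Equiv.Perm.coe_inv]
  push_cast
  ring

lemma nuCongQvee_iff_of_perm {k : ℤ} (hq : q ≤ m) (he : ∀ j, e j.rev = (e j).rev)
    (hν : ∀ j, nuD m t' σ' k (e j) = nuD m t σ k j) :
    NuCongQvee m q t σ k ↔ NuCongQvee m q t' σ' k :=
  ⟨NuCongQvee.of_perm hq he hν,
    NuCongQvee.of_perm hq (inv_apply_rev he) fun j => by simp [← hν]⟩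

lemma sp1'_iff_of_perm {k : ℤ} (he : ∀ j, e j.rev = (e j).rev)
    (hν : ∀ j, nuD m t' σ' k (e j) = nuD m t σ k j) :
    SP1' m t σ k ↔ SP1' m t' σ' k :=
  and_congr (e.forall_congr fun j => by rw [← he, hν, hν])
    (e.forall_congr fun j => by rw [hν])

lemma ncard_setOf_nuD_of_perm {k : ℤ} (hν : ∀ j, nuD m t' σ' k (e j) = nuD m t σ k j)
    (P : ℝ → Prop) :
    {j | P (nuD m t' σ' k j)}.ncard = {j | P (nuD m t σ k j)}.ncard := by
  have : {j | P (nuD m t' σ' k j)} = ⇑(e⁻¹) ⁻¹' {j | P (nuD m t σ k j)} := by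
    ext j
    simp [← hν]
  rw [this, Set.ncard_preimage_of_injective_subset_range (e⁻¹).injective (by simp)]

lemma sp2'_iff_of_perm {k : ℤ} (hν : ∀ j, nuD m t' σ' k (e j) = nuD m t σ k j) :
    SP2' m q t σ k ↔ SP2' m q t' σ' k := by
  simp only [SP2', ncard_setOf_nuD_of_perm hν (· = 2),
    ncard_setOf_nuD_of_perm hν (¬ IsIntVal ·)]

lemma sp3'_iff_of_perm {k : ℕ} (hq : q ≤ m) (he : ∀ j, e j.rev = (e j).rev)
    (hB : ∀ j, memB m k (e j) ↔ memB m k j)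
    (hν : ∀ j, nuD m t' σ' k (e j) = nuD m t σ k j) :
    SP3' m q t σ k ↔ SP3' m q t' σ' k := by
  have hA : ∀ j, memA m k (e j) ↔ memA m k j := fun j => by
    rw [memA_iff_not_memB, memA_iff_not_memB, hB]
  unfold SP3'
  refine imp_congr (and_congr (e.forall_congr fun j => by rw [hν])
    (not_congr (nuCongQvee_iff_of_perm hq he hν)))
    (e.exists_congr fun j₁ => e.exists_congr fun j₂ => by rw [hA, hB, hν, hν])

end PermutedNu

lemma sp'_iff_mul_of_fixes {m q k : ℕ} (hq : q ≤ m) (hk : k ≤ m) (t tx : VecZ m)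
    (σ σx : Equiv.Perm (Fin (2 * m))) (hσx : ∀ j, σx j.rev = (σx j).rev)
    (hfix : ∀ j, (tx j : ℝ) + aD m k (σx⁻¹ j) = aD m k j) :
    (SP1' m t σ k ↔ SP1' m (fun l => tx l + t (σx⁻¹ l)) (σx * σ) k) ∧
    (SP2' m q t σ k ↔ SP2' m q (fun l => tx l + t (σx⁻¹ l)) (σx * σ) k) ∧
    (SP3' m q t σ k ↔ SP3' m q (fun l => tx l + t (σx⁻¹ l)) (σx * σ) k) :=
  have hν := nuD_mul_apply_of_fixes hk t tx σ σx hfix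
  ⟨sp1'_iff_of_perm hσx hν, sp2'_iff_of_perm hν,
    sp3'_iff_of_perm hq hσx (memB_apply_iff_of_fixes hfix) hν⟩

theorem statement18_general (m q : ℕ) (hq : q ≤ m - 1)
    (I : Finset ℕ) (hIm : ∀ a ∈ I, a ≤ m)
    (t : VecZ m) (σ : Equiv.Perm (Fin (2 * m)))
    (tx : VecZ m) (σx : Equiv.Perm (Fin (2 * m))) (hσx : InSO m σx)
    (hx : MemWI m I tx σx)
    (k : ℕ) (hk : k ∈ I) :
    (SP1' m t σ (k : ℤ) ↔ SP1' m (fun l => tx l + t (σx⁻¹ l)) (σx * σ) (k : ℤ)) ∧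
    (SP2' m q t σ (k : ℤ) ↔ SP2' m q (fun l => tx l + t (σx⁻¹ l)) (σx * σ) (k : ℤ)) ∧
    (SP3' m q t σ k ↔ SP3' m q (fun l => tx l + t (σx⁻¹ l)) (σx * σ) k) ∧
    ((∀ k' ∈ I, SP1' m t σ (k' : ℤ) ∧ SP2' m q t σ (k' : ℤ) ∧ SP3' m q t σ k') ↔
      (∀ k' ∈ I, SP1' m (fun l => tx l + t (σx⁻¹ l)) (σx * σ) (k' : ℤ) ∧
        SP2' m q (fun l => tx l + t (σx⁻¹ l)) (σx * σ) (k' : ℤ) ∧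
        SP3' m q (fun l => tx l + t (σx⁻¹ l)) (σx * σ) k')) := by
  have hSP := fun k' (hk' : k' ∈ I) =>
    sp'_iff_mul_of_fixes (q := q) (by omega) (hIm k' hk') t tx σ σx hσx.2 (hx.2 k' hk')
  refine ⟨(hSP k hk).1, (hSP k hk).2.1, (hSP k hk).2.2, forall₂_congr fun k' hk' => ?_⟩
  obtain ⟨h₁, h₂, h₃⟩ := hSP k' hk'
  exact and_congr h₁ (and_congr h₂ h₃)

theorem statement18 (m q : ℕ) (hm : 2 ≤ m) (hq : q ≤ m - 1)
    (I : Finset ℕ) (hI : I.Nonempty) (hIm : ∀ a ∈ I, a ≤ m)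
    (h1I : 1 ∈ I → 0 ∈ I) (h2I : m - 1 ∈ I → m ∈ I)
    (t : VecZ m) (σ : Equiv.Perm (Fin (2 * m))) (ht : InXD m t) (hσ : InSO m σ)
    (tx : VecZ m) (σx : Equiv.Perm (Fin (2 * m))) (htx : InXD m tx) (hσx : InSO m σx)
    (hx : MemWI m I tx σx)
    (k : ℕ) (hk : k ∈ I) :
    (SP1' m t σ (k : ℤ) ↔ SP1' m (fun l => tx l + t (σx⁻¹ l)) (σx * σ) (k : ℤ)) ∧
    (SP2' m q t σ (k : ℤ) ↔ SP2' m q (fun l => tx l + t (σx⁻¹ l)) (σx * σ) (k : ℤ)) ∧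
    (SP3' m q t σ k ↔ SP3' m q (fun l => tx l + t (σx⁻¹ l)) (σx * σ) k) ∧
    ((∀ k' ∈ I, SP1' m t σ (k' : ℤ) ∧ SP2' m q t σ (k' : ℤ) ∧ SP3' m q t σ k') ↔
      (∀ k' ∈ I, SP1' m (fun l => tx l + t (σx⁻¹ l)) (σx * σ) (k' : ℤ) ∧
        SP2' m q (fun l => tx l + t (σx⁻¹ l)) (σx * σ) (k' : ℤ) ∧
        SP3' m q (fun l => tx l + t (σx⁻¹ l)) (σx * σ) k')) :=
  statement18_general m q hq I hIm t σ tx σx hσx hx k hk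

end TypeD
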